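/- Thomae's transformation for terminating ₃F₂ series at 1: for a nonnegative integer n and parameters a, b, c, d (with c, d avoiding nonpositive integers in the relevant range), ₃F₂(-n, a, b; c, d; 1) = [(d-b)_n / (d)_n] · ₃F₂(-n, c-a, b; c, 1+b-d-n; 1), where ₃F₂(-n,a,b;c,d;1) = Σ_{k=0}^{n} [(-n)_k (a)_k (b)_k / ((c)_k (d)_k k!)]. -/
import Mathlib


open Finset

/-- Pochhammer (rising factorial) symbol. -/
noncomputable def poch (a : ℝ) (k : ℕ) : ℝ := ∏ i ∈ Finset.range k, (a + i)

/-- Terminating `₃F₂(-n, a, b; c, d; 1)`. -/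
noncomputable def F32 (n : ℕ) (a b c d : ℝ) : ℝ :=
  ∑ k ∈ Finset.range (n + 1),
    poch (-(n : ℝ)) k * poch a k * poch b k /
      (poch c k * poch d k * (Nat.factorial k : ℝ))

/-- Falling factorial. -/
noncomputable def fall (x : ℝ) (k : ℕ) : ℝ := ∏ i ∈ Finset.range k, (x - i)

lemma fall_succ (x : ℝ) (k : ℕ) : fall x (k + 1) = fall x k * (x - k) :=
  Finset.prod_range_succ _ _

lemma neg_one_sq_pow (j : ℕ) : ((-1 : ℝ)) ^ j * (-1) ^ j = 1 := by
  rw [← pow_add, ← two_mul, pow_mul]; norm_num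

lemma poch_eq_fall (a : ℝ) (k : ℕ) : poch a k = (-1) ^ k * fall (-a) k := by
  unfold poch fall
  have h : ∀ i ∈ Finset.range k, a + (i : ℝ) = (-1) * (-a - i) := fun i _ => by ring
  rw [Finset.prod_congr rfl h, Finset.prod_mul_distrib, Finset.prod_const, card_range]

lemma fall_eq_poch_neg (a : ℝ) (k : ℕ) : fall (-a) k = (-1) ^ k * poch a k := by
  rw [poch_eq_fall, ← mul_assoc, neg_one_sq_pow, one_mul]

lemma fall_eq_poch (x : ℝ) (k : ℕ) : fall x k = poch (x - k + 1) k := by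
  unfold poch fall
  rw [← Finset.prod_range_reflect]
  refine Finset.prod_congr rfl fun j hj => ?_
  have hj' : j < k := Finset.mem_range.mp hj
  have h1 : ((k - 1 - j : ℕ) : ℝ) = (k : ℝ) - 1 - j := by
    have := Nat.cast_sub (by omega : 1 + j ≤ k) (R := ℝ)
    push_cast at this ⊢
    rw [show k - 1 - j = k - (1 + j) by omega, this]
    ring
  rw [h1]; ring

lemma poch_add (x : ℝ) (j m : ℕ) : poch x (j + m) = poch x j * poch (x + j) m := by
  unfold poch
  rw [Finset.prod_range_add]
  congr 1
  refine Finset.prod_congr rfl fun i _ => ?_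
  push_cast; ring

lemma fall_nat (k j : ℕ) : fall (k : ℝ) j = (k.descFactorial j : ℝ) := by
  induction j with
  | zero => simp [fall]
  | succ j ih =>
    rw [fall_succ, ih, Nat.descFactorial_succ, Nat.cast_mul]
    by_cases h : j ≤ k
    · rw [Nat.cast_sub h]; ring
    · have h0 : k.descFactorial j = 0 := Nat.descFactorial_of_lt (by omega)
      simp [h0]

lemma poch_neg_nat (k j : ℕ) : poch (-(k : ℝ)) j = (-1) ^ j * (k.descFactorial j : ℝ) := by
  rw [poch_eq_fall, neg_neg, fall_nat]

lemma poch_neg_nat_zero {k j : ℕ} (h : k < j) : poch (-(k : ℝ)) j = 0 := by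
  rw [poch_neg_nat, Nat.descFactorial_of_lt h]; simp

lemma poch_reflect (x : ℝ) (m : ℕ) : poch x m = (-1) ^ m * poch (1 - x - m) m := by
  rw [poch_eq_fall x m, fall_eq_poch]
  congr 2
  ring

lemma descPochhammer_smeval_eq_fall (x : ℝ) (k : ℕ) :
    (descPochhammer ℤ k).smeval x = fall x k := by
  induction k with
  | zero => simp [fall, descPochhammer]
  | succ k ih =>
    rw [descPochhammer_succ_right, Polynomial.smeval_mul, ih, fall_succ,
      Polynomial.smeval_sub, Polynomial.smeval_X, Polynomial.smeval_natCast]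
    simp

lemma fall_vandermonde (x y : ℝ) (k : ℕ) :
    ∑ j ∈ Finset.range (k + 1), (k.choose j : ℝ) * (fall x j * fall y (k - j))
      = fall (x + y) k := by
  have h := Ring.descPochhammer_smeval_add (R := ℝ) k (Commute.all x y)
  rw [Finset.Nat.sum_antidiagonal_eq_sum_range_succ_mk] at h
  simp only [descPochhammer_smeval_eq_fall] at h
  exact h.symm

/-- Chu–Vandermonde for terminating `₂F₁` at `1`. -/
lemma chu_vandermonde (k : ℕ) (a c : ℝ) (hc : ∀ j ≤ k, poch c j ≠ 0) :
    ∑ j ∈ Finset.range (k + 1),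
        poch (-(k : ℝ)) j * poch a j / (poch c j * (Nat.factorial j : ℝ))
      = poch (c - a) k / poch c k := by
  rw [eq_div_iff (hc k le_rfl), Finset.sum_mul]
  have key : ∀ j ∈ Finset.range (k + 1),
      poch (-(k : ℝ)) j * poch a j / (poch c j * (Nat.factorial j : ℝ)) * poch c k
        = (k.choose j : ℝ) * (fall (-a) j * fall (c + k - 1) (k - j)) := by
    intro j hj
    have hjk : j ≤ k := Nat.lt_succ_iff.mp (Finset.mem_range.mp hj)
    have h1 : poch c k = poch c j * poch (c + j) (k - j) := by
      rw [← poch_add]; congr 1; omega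
    have h2 : poch (-(k : ℝ)) j
        = (-1) ^ j * ((Nat.factorial j : ℝ) * (k.choose j : ℝ)) := by
      rw [poch_neg_nat, Nat.descFactorial_eq_factorial_mul_choose]; push_cast; ring
    have h3 : fall (c + k - 1) (k - j) = poch (c + j) (k - j) := by
      rw [fall_eq_poch]; congr 1
      rw [Nat.cast_sub hjk]; ring
    have h4 : fall (-a) j = (-1) ^ j * poch a j := fall_eq_poch_neg a j
    rw [h1, h2, h3, h4]
    have hcj := hc j hjk
    have hfj : (Nat.factorial j : ℝ) ≠ 0 := Nat.cast_ne_zero.mpr (Nat.factorial_ne_zero j)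
    field_simp
  rw [Finset.sum_congr rfl key, fall_vandermonde]
  rw [fall_eq_poch]
  congr 1
  ring

/-- Thomae's transformation formula for terminating `₃F₂` series at `1`. -/
theorem thomae_transformation (n : ℕ) (a b c d : ℝ)
    (hc : ∀ k ≤ n, poch c k ≠ 0)
    (hd : ∀ k ≤ n, poch d k ≠ 0)
    (he : ∀ k ≤ n, poch (1 + b - d - (n : ℝ)) k ≠ 0) :
    F32 n a b c d
      = poch (d - b) n / poch d n * F32 n (c - a) b c (1 + b - d - (n : ℝ)) := by
  set e : ℝ := 1 + b - d - (n : ℝ) with hE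
  have hfac : ∀ m : ℕ, (Nat.factorial m : ℝ) ≠ 0 :=
    fun m => Nat.cast_ne_zero.mpr m.factorial_ne_zero
  set A : ℕ → ℝ := fun j =>
    (-1) ^ j * (poch (-(n : ℝ)) j * poch a j * poch b j) /
      (poch c j * poch e j * (Nat.factorial j : ℝ)) with hA
  -- the double-sum term
  set f : ℕ → ℕ → ℝ := fun k j =>
    poch (-(k : ℝ)) j * poch a j / (poch c j * (Nat.factorial j : ℝ)) *
      (poch (-(n : ℝ)) k * poch b k / (poch e k * (Nat.factorial k : ℝ))) with hf
  -- Step A: expand the RHS 3F2 into a double sum via Chu-Vandermonde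
  have stepA : F32 n (c - a) b c e
      = ∑ k ∈ Finset.range (n + 1), ∑ j ∈ Finset.range (n + 1), f k j := by
    unfold F32
    refine Finset.sum_congr rfl fun k hk => ?_
    have hkn : k ≤ n := Nat.lt_succ_iff.mp (Finset.mem_range.mp hk)
    have hext : ∑ j ∈ Finset.range (n + 1),
        poch (-(k : ℝ)) j * poch a j / (poch c j * (Nat.factorial j : ℝ))
        = ∑ j ∈ Finset.range (k + 1),
        poch (-(k : ℝ)) j * poch a j / (poch c j * (Nat.factorial j : ℝ)) := by
      refine (Finset.sum_subset (Finset.range_subset_range.mpr (by omega)) ?_).symm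
      intro j _ hj
      have hkj : k < j := by
        simp only [Finset.mem_range, not_lt] at hj; omega
      rw [poch_neg_nat_zero hkj, zero_mul, zero_div]
    have hcv := chu_vandermonde k a c (fun j hj => hc j (hj.trans hkn))
    simp only [hf]
    rw [← Finset.sum_mul, hext, hcv]
    field_simp
  -- Step B+C+D : swap, reindex, and apply Chu-Vandermonde again
  have stepD : ∀ j ∈ Finset.range (n + 1),
      ∑ k ∈ Finset.range (n + 1), f k j
        = A j * (poch (1 - d - (n : ℝ)) (n - j) / poch (e + j) (n - j)) := by
    intro j hj
    have hjn : j ≤ n := Nat.lt_succ_iff.mp (Finset.mem_range.mp hj)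
    have hEj : ∀ m ≤ n - j, poch (e + j) m ≠ 0 := by
      intro m hm
      have h1 : poch e (j + m) ≠ 0 := he (j + m) (by omega)
      rw [poch_add] at h1
      exact fun h0 => h1 (by rw [h0, mul_zero])
    have hreix : ∑ k ∈ Finset.range (n + 1), f k j
        = ∑ m ∈ Finset.range ((n - j) + 1), f (j + m) j := by
      rw [show n + 1 = j + ((n - j) + 1) by omega, Finset.sum_range_add]
      have hz : ∑ k ∈ Finset.range j, f k j = 0 := by
        refine Finset.sum_eq_zero fun k hk => ?_
        have : k < j := Finset.mem_range.mp hk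
        simp only [hf]
        rw [poch_neg_nat_zero this, zero_mul, zero_div, zero_mul]
      rw [hz, zero_add]
    have hterm : ∀ m ∈ Finset.range ((n - j) + 1), f (j + m) j
        = A j * (poch (-((n - j : ℕ) : ℝ)) m * poch (b + j) m /
            (poch (e + j) m * (Nat.factorial m : ℝ))) := by
      intro m hm
      have hmnj : m ≤ n - j := Nat.lt_succ_iff.mp (Finset.mem_range.mp hm)
      have hfact : ((j + m).factorial : ℝ)
          = (Nat.factorial m : ℝ) * (((j + m).descFactorial j : ℝ)) := by
        rw [← Nat.factorial_mul_descFactorial (Nat.le_add_right j m),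
          Nat.add_sub_cancel_left, Nat.cast_mul]
      have hpn : poch (-(n : ℝ)) (j + m)
          = poch (-(n : ℝ)) j * poch (-((n - j : ℕ) : ℝ)) m := by
        rw [poch_add]
        congr 2
        push_cast [Nat.cast_sub hjn]
        ring
      have hpk : poch (-((j + m : ℕ) : ℝ)) j
          = (-1) ^ j * (((j + m).descFactorial j : ℝ)) := poch_neg_nat (j + m) j
      have hdF : (((j + m).descFactorial j : ℝ)) ≠ 0 := by
        rw [Ne, Nat.cast_eq_zero, Nat.descFactorial_eq_zero_iff_lt]
        omega
      have hEjm : poch (e + j) m ≠ 0 := hEj m hmnj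
      have hej : poch e j ≠ 0 := he j hjn
      have hcj : poch c j ≠ 0 := hc j hjn
      simp only [hf, hA]
      rw [hpk, hpn, poch_add b j m, poch_add e j m, hfact]
      field_simp
    rw [hreix, Finset.sum_congr rfl hterm, ← Finset.mul_sum,
      chu_vandermonde (n - j) (b + j) (e + j) hEj]
    congr 2
    rw [hE]
    ring
  -- put the right-hand side together
  have key : F32 n (c - a) b c e
      = ∑ j ∈ Finset.range (n + 1),
          A j * (poch (1 - d - (n : ℝ)) (n - j) / poch (e + j) (n - j)) := by
    rw [stepA, Finset.sum_comm]
    exact Finset.sum_congr rfl stepD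
  rw [key, Finset.mul_sum]
  unfold F32
  refine Finset.sum_congr rfl fun j hj => ?_
  have hjn : j ≤ n := Nat.lt_succ_iff.mp (Finset.mem_range.mp hj)
  -- remaining identities
  have hen : poch e n = poch e j * poch (e + j) (n - j) := by
    rw [← poch_add]; congr 1; omega
  have hdn : poch d n = poch d j * poch (d + j) (n - j) := by
    rw [← poch_add]; congr 1; omega
  have hdb : poch (d - b) n = (-1) ^ n * poch e n := by
    rw [poch_reflect (d - b) n, hE]
    congr 2
    ring
  have hrefl : poch (1 - d - (n : ℝ)) (n - j)
      = (-1) ^ (n - j) * poch (d + j) (n - j) := by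
    rw [poch_reflect (1 - d - (n : ℝ)) (n - j)]
    congr 2
    push_cast [Nat.cast_sub hjn]
    ring
  have h3 : ((-1 : ℝ)) ^ n * ((-1) ^ j * (-1) ^ (n - j)) = 1 := by
    rw [← pow_add, show j + (n - j) = n by omega, neg_one_sq_pow]
  have hprod : poch (d - b) n * ((-1 : ℝ)) ^ j * poch (1 - d - (n : ℝ)) (n - j)
      = poch e j * poch (e + j) (n - j) * poch (d + j) (n - j) := by
    rw [hdb, hen, hrefl]
    linear_combination (poch e j * poch (e + j) (n - j) * poch (d + j) (n - j)) * h3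
  have hdnne := hd n le_rfl
  have hdj : poch d j ≠ 0 := hd j hjn
  have hDJ : poch (d + j) (n - j) ≠ 0 := by
    intro h0
    exact hdnne (by rw [hdn, h0, mul_zero])
  have hEJ : poch (e + j) (n - j) ≠ 0 := by
    intro h0
    exact he n le_rfl (by rw [hen, h0, mul_zero])
  have hej : poch e j ≠ 0 := he j hjn
  have hcj : poch c j ≠ 0 := hc j hjn
  simp only [hA]
  rw [hdn, div_mul_div_comm, div_mul_div_comm]
  rw [div_eq_div_iff (mul_ne_zero (mul_ne_zero hcj hdj) (hfac j))
    (mul_ne_zero (mul_ne_zero hdj hDJ)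
      (mul_ne_zero (mul_ne_zero (mul_ne_zero hcj hej) (hfac j)) hEJ))]
  linear_combination (-(poch (-(n : ℝ)) j * poch a j * poch b j * poch c j *
    poch d j * (Nat.factorial j : ℝ))) * hprod
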